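/- Let $\vartheta_1, \vartheta_2, \vartheta_3 > 0$, $0 < m_c < 1$, $\nu \in (0,1)$, and let $V : [0,\infty) \to [0,\infty)$ be differentiable with $\dot V(t) \le -\vartheta_1 V(t) - \vartheta_2 V(t)^{\frac{1+m_c}{2}} + \vartheta_3$ for all $t \ge 0$. Suppose $\sigma, \delta : [0,\infty) \to \mathbb{R}$ satisfy $\tfrac{1}{2}\sigma(t)^2 \le V(t)$ and $\tfrac{1}{2}\delta(t)^2 \le V(t)$ for all $t$. Then there exists $T_s \le \max\{ \tfrac{2}{\nu\vartheta_1(1-m_c)} \ln \tfrac{\nu\vartheta_1 V(0)^{\frac{1-m_c}{2}} + \vartheta_2}{\vartheta_2},\ \tfrac{2}{\vartheta_1(1-m_c)} \ln \tfrac{\vartheta_1 V(0)^{\frac{1-m_c}{2}} + \nu\vartheta_2}{\nu\vartheta_2} \}$ such that for all $t \ge T_s$: $|\sigma(t)| \le B$, $|\delta(t)| \le B$, and $|\sigma(t)| + |\delta(t)| \le 2B$, where $B := \min\Big\{ \sqrt{\tfrac{2\vartheta_3}{(1-\nu)\vartheta_1}},\ \sqrt{2\big(\tfrac{\vartheta_3}{(1-\nu)\vartheta_2}\big)^{\frac{2}{1+m_c}}}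 \Big\}$. -/

import Mathlib

/-!
Write `m = (1 + mc) / 2`. Above the level `L₁ = ϑ₃ / ((1 - ν) ϑ₁)` the constant `ϑ₃` is absorbed
by the share `(1 - ν) ϑ₁ V` of the linear damping, and above `L₂ = (ϑ₃ / ((1 - ν) ϑ₂)) ^ (1 / m)`
by the share `(1 - ν) ϑ₂ V ^ m` of the power damping; either way `V' ≤ -p V - q V ^ m` with
`p, q > 0` there. Along such a trajectory `log (p V ^ (1 - m) + q)` decreases at rate at least
`(1 - m) p`, which bounds the time needed to reach the smaller level, and `V` cannot leave that
sublevel set since `V' < 0` on its boundary. The bounds on `σ` and `δ` follow from `σ² / 2 ≤ V`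
and `δ² / 2 ≤ V`.
-/

open Real Set

/-- A bound on the time in which `V' ≤ -p V - q V ^ m` brings `V` from `v₀` down to `0`,
obtained by integrating `(log (p V ^ (1 - m) + q))' ≤ -(1 - m) p`. -/
noncomputable def settlingTime (p q m v₀ : ℝ) : ℝ :=
  1 / ((1 - m) * p) * log ((p * v₀ ^ (1 - m) + q) / q)

theorem settlingTime_nonneg {p q m v₀ : ℝ} (hp : 0 < p) (hq : 0 < q) (hm : m < 1)
    (hv₀ : 0 ≤ v₀) : 0 ≤ settlingTime p q m v₀ := by
  have h1m : 0 < 1 - m := sub_pos.2 hm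
  have hlog : 0 ≤ log ((p * v₀ ^ (1 - m) + q) / q) :=
    log_nonneg ((one_le_div hq).2 (le_add_of_nonneg_left (by positivity)))
  exact mul_nonneg (by positivity) hlog

theorem settlingTime_one_add_div_two (p q mc v₀ : ℝ) :
    settlingTime p q ((1 + mc) / 2) v₀
      = 2 / (p * (1 - mc)) * log ((p * v₀ ^ ((1 - mc) / 2) + q) / q) := by
  rw [settlingTime, show 1 - (1 + mc) / 2 = (1 - mc) / 2 by ring]
  congr 1
  rw [div_mul_eq_mul_div, one_div_div, mul_comm]

theorem image_le_of_deriv_neg_at_level {f : ℝ → ℝ} {L a t : ℝ}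
    (hf : ∀ s, a ≤ s → DifferentiableAt ℝ f s) (hL : ∀ s, a ≤ s → f s = L → deriv f s < 0)
    (ha : f a ≤ L) (ht : a ≤ t) : f t ≤ L :=
  image_le_of_deriv_right_lt_deriv_boundary (f' := deriv f) (B := fun _ => L) (B' := 0)
    (fun s hs => (hf s hs.1).continuousAt.continuousWithinAt)
    (fun s hs => (hf s hs.1).hasDerivAt.hasDerivWithinAt) ha (fun _ => hasDerivAt_const _ L)
    (fun s hs hfs => hL s hs.1 hfs) ⟨ht, le_rfl⟩

theorem hasDerivAt_log_mul_rpow_add {V : ℝ → ℝ} {V' p q m t : ℝ} (hV : HasDerivAt V V' t)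
    (hVt : 0 < V t) (hp : 0 ≤ p) (hq : 0 < q) :
    HasDerivAt (fun s => log (p * V s ^ (1 - m) + q))
      (p * (1 - m) * V t ^ (-m) * V' / (p * V t ^ (1 - m) + q)) t := by
  have h := ((hV.rpow_const (p := 1 - m) (Or.inl hVt.ne')).const_mul p).add_const q
  convert h.log (by positivity) using 1
  rw [show 1 - m - 1 = -m by ring]
  ring

theorem mul_rpow_neg_mul_div_le_of_le {p q m v d : ℝ} (hp : 0 ≤ p) (hq : 0 < q) (hm : m ≤ 1)
    (hv : 0 < v) (hd : d ≤ -p * v - q * v ^ m) :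
    p * (1 - m) * v ^ (-m) * d / (p * v ^ (1 - m) + q) ≤ -((1 - m) * p) := by
  have h1m : 0 ≤ 1 - m := sub_nonneg.2 hm
  have hscale : v ^ (-m) * (-p * v - q * v ^ m) = -(p * v ^ (1 - m) + q) := by
    rw [rpow_sub hv, rpow_neg hv.le, rpow_one]
    field_simp
    ring
  rw [div_le_iff₀ (by positivity)]
  calc p * (1 - m) * v ^ (-m) * d = p * (1 - m) * (v ^ (-m) * d) := by ring
    _ ≤ p * (1 - m) * (v ^ (-m) * (-p * v - q * v ^ m)) := by gcongr
    _ = -((1 - m) * p) * (p * v ^ (1 - m) + q) := by rw [hscale]; ring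

theorem exists_le_of_deriv_le_neg_mul_sub_mul_rpow {V : ℝ → ℝ} {p q m L : ℝ} (hp : 0 < p)
    (hq : 0 < q) (hm : m < 1) (hL : 0 ≤ L) (hV₀ : 0 ≤ V 0)
    (hV : ∀ t, 0 ≤ t → DifferentiableAt ℝ V t)
    (hder : ∀ t, 0 ≤ t → L ≤ V t → deriv V t ≤ -p * V t - q * V t ^ m) :
    ∃ t₀ ∈ Icc 0 (settlingTime p q m (V 0)), V t₀ ≤ L := by
  set T := settlingTime p q m (V 0)
  have hT : 0 ≤ T := settlingTime_nonneg hp hq hm hV₀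
  by_contra! hgt
  have hpos : ∀ t ∈ Icc 0 T, 0 < V t := fun t ht => hL.trans_lt (hgt t ht)
  set W := fun s => log (p * V s ^ (1 - m) + q)
  have hW : ∀ t ∈ Icc 0 T, HasDerivAt W
      (p * (1 - m) * V t ^ (-m) * deriv V t / (p * V t ^ (1 - m) + q)) t :=
    fun t ht => hasDerivAt_log_mul_rpow_add (hV t ht.1).hasDerivAt (hpos t ht) hp.le hq
  have hdecay : W T - W 0 ≤ -((1 - m) * p) * (T - 0) := by
    refine (convex_Icc 0 T).image_sub_le_mul_sub_of_deriv_le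
      (fun t ht => (hW t ht).continuousAt.continuousWithinAt)
      (fun t ht => (hW t (interior_subset ht)).differentiableAt.differentiableWithinAt)
      (fun t ht => ?_) 0 ⟨le_rfl, hT⟩ T ⟨hT, le_rfl⟩ hT
    have ht' : t ∈ Icc 0 T := interior_subset ht
    rw [(hW t ht').deriv]
    exact mul_rpow_neg_mul_div_le_of_le hp.le hq hm.le (hpos t ht') (hder t ht'.1 (hgt t ht').le)
  have hTW : (1 - m) * p * T = W 0 - log q := by
    have h1m : 0 < 1 - m := sub_pos.2 hm
    simp only [T, W, settlingTime]
    rw [log_div (by positivity) hq.ne']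
    field_simp
  have hVT : 0 < V T := hpos T ⟨hT, le_rfl⟩
  have hWT : p * V T ^ (1 - m) + q ≤ q := by
    rw [← log_le_log_iff (by positivity) hq]
    change W T ≤ log q
    linarith
  linarith [mul_pos hp (rpow_pos_of_pos hVT (1 - m))]

theorem exists_forall_ge_le_of_deriv_le_neg_mul_sub_mul_rpow {V : ℝ → ℝ} {p q m L : ℝ}
    (hp : 0 < p) (hq : 0 < q) (hm : m < 1) (hL : 0 < L) (hV₀ : 0 ≤ V 0)
    (hV : ∀ t, 0 ≤ t → DifferentiableAt ℝ V t)
    (hder : ∀ t, 0 ≤ t → L ≤ V t → deriv V t ≤ -p * V t - q * V t ^ m) :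
    ∃ Ts ∈ Icc 0 (settlingTime p q m (V 0)), ∀ t ≥ Ts, V t ≤ L := by
  obtain ⟨Ts, hTs, hVTs⟩ :=
    exists_le_of_deriv_le_neg_mul_sub_mul_rpow hp hq hm hL.le hV₀ hV hder
  refine ⟨Ts, hTs, fun t ht => image_le_of_deriv_neg_at_level
    (fun s hs => hV s (hTs.1.trans hs)) (fun s hs hVs => ?_) hVTs ht⟩
  have hlin : 0 < p * V s := mul_pos hp (hVs ▸ hL)
  have hpow : 0 < q * V s ^ m := mul_pos hq (rpow_pos_of_pos (hVs ▸ hL) m)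
  linarith [hder s (hTs.1.trans hs) hVs.ge]

theorem exists_forall_ge_le_min_of_deriv_le {V : ℝ → ℝ} {a b c ν m : ℝ} (ha : 0 < a)
    (hb : 0 < b) (hc : 0 < c) (hν : ν ∈ Ioo 0 1) (hm₀ : 0 < m) (hm₁ : m < 1) (hV₀ : 0 ≤ V 0)
    (hV : ∀ t, 0 ≤ t → DifferentiableAt ℝ V t)
    (hder : ∀ t, 0 ≤ t → deriv V t ≤ -a * V t - b * V t ^ m + c) :
    ∃ Ts ∈ Icc 0 (max (settlingTime (ν * a) b m (V 0)) (settlingTime a (ν * b) m (V 0))),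
      ∀ t ≥ Ts, V t ≤ min (c / ((1 - ν) * a)) ((c / ((1 - ν) * b)) ^ (1 / m)) := by
  obtain ⟨hν₀, hν₁⟩ := hν
  have h1ν : 0 < 1 - ν := sub_pos.2 hν₁
  rcases le_total (c / ((1 - ν) * a)) ((c / ((1 - ν) * b)) ^ (1 / m)) with hle | hle
  · obtain ⟨Ts, hTs, hVle⟩ := exists_forall_ge_le_of_deriv_le_neg_mul_sub_mul_rpow
      (L := c / ((1 - ν) * a)) (mul_pos hν₀ ha) hb hm₁ (by positivity) hV₀ hV fun t ht hLt => by
        have hc' : c ≤ (1 - ν) * a * V t := (div_le_iff₀' (by positivity)).1 hLt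
        linarith [hder t ht]
    exact ⟨Ts, ⟨hTs.1, hTs.2.trans (le_max_left _ _)⟩,
      fun t ht => (hVle t ht).trans_eq (min_eq_left hle).symm⟩
  · obtain ⟨Ts, hTs, hVle⟩ := exists_forall_ge_le_of_deriv_le_neg_mul_sub_mul_rpow
      (L := (c / ((1 - ν) * b)) ^ (1 / m)) ha (mul_pos hν₀ hb) hm₁ (by positivity) hV₀ hV
      fun t ht hLt => by
        have hVt : 0 ≤ V t := (by positivity : (0 : ℝ) ≤ _).trans hLt
        rw [one_div, rpow_inv_le_iff_of_pos (by positivity) hVt hm₀] at hLt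
        have hc' : c ≤ (1 - ν) * b * V t ^ m := (div_le_iff₀' (by positivity)).1 hLt
        linarith [hder t ht]
    exact ⟨Ts, ⟨hTs.1, hTs.2.trans (le_max_right _ _)⟩,
      fun t ht => (hVle t ht).trans_eq (min_eq_right hle).symm⟩

theorem abs_le_sqrt_two_mul_of_sq_div_two_le {x v : ℝ} (h : x ^ 2 / 2 ≤ v) : |x| ≤ √(2 * v) := by
  rw [← sqrt_sq_eq_abs]
  exact sqrt_le_sqrt (by linarith)

/-- Concluding step of Theorem 1 (displays (21)–(25)): if the closed-loop
Lyapunov function `V` satisfies the fast finite-time differential inequality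
`V' ≤ -ϑ₁ V - ϑ₂ V^{(1+m_c)/2} + ϑ₃` and dominates `σ²/2` and `δ²/2`, then
after a settling time `Tₛ` bounded by the explicit expression, `|σ|`, `|δ|`
and `|σ| + |δ|` stay within the explicit residual bounds. -/
theorem closed_loop_fast_finite_time_residual_bounds
    (ϑ₁ ϑ₂ ϑ₃ mc ν : ℝ)
    (hϑ₁ : 0 < ϑ₁) (hϑ₂ : 0 < ϑ₂) (hϑ₃ : 0 < ϑ₃)
    (hmc0 : 0 < mc) (hmc1 : mc < 1) (hν : ν ∈ Set.Ioo (0 : ℝ) 1)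
    (V : ℝ → ℝ)
    (hVnonneg : ∀ t, 0 ≤ t → 0 ≤ V t)
    (hVdiff : ∀ t, 0 ≤ t → DifferentiableAt ℝ V t)
    (hVineq : ∀ t, 0 ≤ t →
      deriv V t ≤ -ϑ₁ * V t - ϑ₂ * (V t) ^ ((1 + mc) / 2) + ϑ₃)
    (σ δ : ℝ → ℝ)
    (hσ : ∀ t, 0 ≤ t → σ t ^ 2 / 2 ≤ V t)
    (hδ : ∀ t, 0 ≤ t → δ t ^ 2 / 2 ≤ V t) :
    ∃ Ts : ℝ,
      Ts ≤ max
        ((2 / (ν * ϑ₁ * (1 - mc))) *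
          Real.log ((ν * ϑ₁ * (V 0) ^ ((1 - mc) / 2) + ϑ₂) / ϑ₂))
        ((2 / (ϑ₁ * (1 - mc))) *
          Real.log ((ϑ₁ * (V 0) ^ ((1 - mc) / 2) + ν * ϑ₂) / (ν * ϑ₂))) ∧
      ∀ t ≥ Ts,
        |σ t| ≤ min (Real.sqrt (2 * ϑ₃ / ((1 - ν) * ϑ₁)))
            (Real.sqrt (2 * (ϑ₃ / ((1 - ν) * ϑ₂)) ^ (2 / (1 + mc)))) ∧
        |δ t| ≤ min (Real.sqrt (2 * ϑ₃ / ((1 - ν) * ϑ₁)))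
            (Real.sqrt (2 * (ϑ₃ / ((1 - ν) * ϑ₂)) ^ (2 / (1 + mc)))) ∧
        |σ t| + |δ t| ≤ 2 * min (Real.sqrt (2 * ϑ₃ / ((1 - ν) * ϑ₁)))
            (Real.sqrt (2 * (ϑ₃ / ((1 - ν) * ϑ₂)) ^ (2 / (1 + mc)))) := by
  obtain ⟨Ts, hTs, hV⟩ := exists_forall_ge_le_min_of_deriv_le (m := (1 + mc) / 2)
    hϑ₁ hϑ₂ hϑ₃ hν (by linarith) (by linarith) (hVnonneg 0 le_rfl) hVdiff hVineq
  rw [one_div_div] at hV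
  simp only [settlingTime_one_add_div_two] at hTs
  have hres : ∀ t ≥ Ts, ∀ x : ℝ, x ^ 2 / 2 ≤ V t →
      |x| ≤ min (√(2 * ϑ₃ / ((1 - ν) * ϑ₁))) (√(2 * (ϑ₃ / ((1 - ν) * ϑ₂)) ^ (2 / (1 + mc)))) := by
    intro t ht x hx
    have hx' := abs_le_sqrt_two_mul_of_sq_div_two_le hx
    rw [mul_div_assoc]
    exact le_min (hx'.trans (sqrt_le_sqrt (by linarith [(hV t ht).trans (min_le_left _ _)])))
      (hx'.trans (sqrt_le_sqrt (by linarith [(hV t ht).trans (min_le_right _ _)])))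
  refine ⟨Ts, hTs.2, fun t ht => ?_⟩
  have ht₀ : 0 ≤ t := hTs.1.trans ht
  have hσt := hres t ht _ (hσ t ht₀)
  have hδt := hres t ht _ (hδ t ht₀)
  exact ⟨hσt, hδt, by linarith⟩
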